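/- Let d ≥ 2, L ≥ 1, and let λ_0, …, λ_{L−1} be real parameters with −1/(d²−1) ≤ λ_i ≤ 1. Writing χ_i({p_j, ρ_j}) = S(Σ_j p_j Δ_{λ_i}(ρ_j)) − Σ_j p_j S(Δ_{λ_i}(ρ_j)) for the Holevo quantity of the i-th depolarizing branch, the supremum of the average and the average of the suprema coincide: (1/L) sup_{{p_j, ρ_j}} Σ_{i=0}^{L−1} χ_i({p_j, ρ_j}) = (1/L) Σ_{i=0}^{L−1} sup_{{p_j, ρ_j}} χ_i({p_j, ρ_j}) = log₂ d − (1/L) Σ_{i=0}^{L−1} S_min(Δ_{λ_i}), where the suprema are over all ensembles of d-dimensional density matrices. -/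

import Mathlib

open scoped BigOperators Classical ComplexOrder
open Matrix Filter

/-- The von Neumann entropy of a matrix (in bits): `S(ρ) = −Σ_i μ_i log₂ μ_i`
where `μ_i` are the eigenvalues (defined to be `0` if the matrix is not Hermitian). -/
noncomputable def vnEntropy {m : Type*} [Fintype m] [DecidableEq m]
    (ρ : Matrix m m ℂ) : ℝ :=
  if h : ρ.IsHermitian then -∑ i, (h.eigenvalues i) * Real.logb 2 (h.eigenvalues i) else 0

/-- A density matrix: positive semidefinite with unit trace. -/
def IsDensityMatrix {m : Type*} [Fintype m] [DecidableEq m] (ρ : Matrix m m ℂ) : Prop :=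
  ρ.PosSemidef ∧ ρ.trace = 1

/-- An ensemble `{p_j, ρ_j}`: probabilities summing to one together with density matrices. -/
def IsEnsemble {m : Type*} [Fintype m] [DecidableEq m] {k : ℕ}
    (p : Fin k → ℝ) (ρ : Fin k → Matrix m m ℂ) : Prop :=
  (∀ j, 0 ≤ p j) ∧ (∑ j, p j) = 1 ∧ ∀ j, IsDensityMatrix (ρ j)

/-- The Holevo quantity `χ({p_j, Φ(ρ_j)}) = S(Σ_j p_j Φ(ρ_j)) − Σ_j p_j S(Φ(ρ_j))`. -/
noncomputable def holevoQ {m : Type*} [Fintype m] [DecidableEq m] {k : ℕ}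
    (Φ : Matrix m m ℂ → Matrix m m ℂ) (p : Fin k → ℝ) (ρ : Fin k → Matrix m m ℂ) : ℝ :=
  vnEntropy (∑ j, (p j : ℂ) • Φ (ρ j)) - ∑ j, p j * vnEntropy (Φ (ρ j))

/-- The Holevo capacity `χ*(Φ)`: supremum of the Holevo quantity over all ensembles. -/
noncomputable def holevoCap {m : Type*} [Fintype m] [DecidableEq m]
    (Φ : Matrix m m ℂ → Matrix m m ℂ) : ℝ :=
  sSup {x | ∃ (k : ℕ) (p : Fin k → ℝ) (ρ : Fin k → Matrix m m ℂ),
    IsEnsemble p ρ ∧ x = holevoQ Φ p ρ}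

/-- The minimum output entropy `S_min(Φ)`. -/
noncomputable def minOutEntropy {m : Type*} [Fintype m] [DecidableEq m]
    (Φ : Matrix m m ℂ → Matrix m m ℂ) : ℝ :=
  sInf {x | ∃ ρ, IsDensityMatrix ρ ∧ x = vnEntropy (Φ ρ)}

/-- The `d`-dimensional depolarizing channel `Δ_λ(ρ) = λρ + ((1−λ)/d)(tr ρ) I`. -/
noncomputable def depol (d : ℕ) (lam : ℝ) (ρ : Matrix (Fin d) (Fin d) ℂ) :
    Matrix (Fin d) (Fin d) ℂ :=
  (lam : ℂ) • ρ + (((1 - lam) / d : ℝ) : ℂ) • ρ.trace • (1 : Matrix (Fin d) (Fin d) ℂ)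

/-- The tensor product channel `Φ_0 ⊗ ⋯ ⊗ Φ_{n−1}` acting on matrices on `(ℂ^d)^{⊗n}`,
defined by linearity from its action on tensor products of matrix units. -/
noncomputable def tensorChannel {d n : ℕ}
    (Φ : Fin n → (Matrix (Fin d) (Fin d) ℂ → Matrix (Fin d) (Fin d) ℂ))
    (ρ : Matrix (Fin n → Fin d) (Fin n → Fin d) ℂ) :
    Matrix (Fin n → Fin d) (Fin n → Fin d) ℂ :=
  fun a b => ∑ x : Fin n → Fin d, ∑ y : Fin n → Fin d,
    ρ x y * ∏ k, (Φ k (Matrix.single (x k) (y k) 1)) (a k) (b k)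

/-- The `n`-fold action of the periodic channel with branches `Δ_{λ_0}, …, Δ_{λ_{L−1}}`:
`Ω_per^{(n)}(ρ) = (1/L) Σ_{i=0}^{L−1} (Δ_{λ_i} ⊗ Δ_{λ_{i+1}} ⊗ ⋯ ⊗ Δ_{λ_{i+n−1}})(ρ)`,
indices mod `L`. -/
noncomputable def periodicChannel {d L : ℕ} (hL : 0 < L) (lam : Fin L → ℝ) (n : ℕ)
    (ρ : Matrix (Fin n → Fin d) (Fin n → Fin d) ℂ) :
    Matrix (Fin n → Fin d) (Fin n → Fin d) ℂ :=
  (1 / (L : ℂ)) • ∑ i : Fin L,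
    tensorChannel (fun k : Fin n => depol d (lam ⟨(i.val + k.val) % L, Nat.mod_lt _ hL⟩)) ρ

/-!
If `ρ` has spectrum `μ`, then `Δ_λ(ρ)` has spectrum `λ μ_i + (1 - λ)/d`, a convex combination of
the two values `λ + (1 - λ)/d` and `(1 - λ)/d` making up the output spectrum of a pure state.
Concavity of `-x log x` therefore puts every output entropy between `S_min(Δ_λ)`, attained on pure
states, and `log₂ d`, so each branch Holevo quantity is at most `log₂ d - S_min(Δ_λ)`. The uniform
ensemble of computational-basis states attains this bound for every `λ` at once, which is why the
supremum of the sum equals the sum of the suprema.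
-/

open Real

section Spectral

variable {n : Type*} [Fintype n] [DecidableEq n]

namespace Matrix

open Polynomial in
lemma charpoly_unitary_conj_diagonal {U : Matrix n n ℂ} (hU : U ∈ unitaryGroup n ℂ)
    (f : n → ℂ) : (U * diagonal f * star U).charpoly = ∏ i, (X - C (f i)) := by
  rw [charpoly_mul_comm, ← mul_assoc, mem_unitaryGroup_iff'.mp hU, one_mul, charpoly_diagonal]

open Polynomial in
lemma IsHermitian.sum_comp_eigenvalues_unitary_conj_diagonal {U : Matrix n n ℂ}
    (hU : U ∈ unitaryGroup n ℂ) {f : n → ℝ}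
    (hA : (U * diagonal (fun i => (f i : ℂ)) * star U).IsHermitian) (g : ℝ → ℝ) :
    ∑ i, g (hA.eigenvalues i) = ∑ i, g (f i) := by
  have hroots := hA.roots_charpoly_eq_eigenvalues
  rw [charpoly_unitary_conj_diagonal hU, roots_prod _ _ (by
    simp [Finset.prod_ne_zero_iff, X_sub_C_ne_zero])] at hroots
  simp only [roots_X_sub_C, Multiset.bind_singleton] at hroots
  have hmap : Finset.univ.val.map f = Finset.univ.val.map hA.eigenvalues :=
    Multiset.map_injective Complex.ofReal_injective (by simpa [Multiset.map_map] using hroots)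
  have hsum := congrArg (fun s => (s.map g).sum) hmap.symm
  simp only [Multiset.map_map] at hsum
  exact hsum

lemma isHermitian_unitary_conj_diagonal (U : Matrix n n ℂ) (f : n → ℝ) :
    (U * diagonal (fun i => (f i : ℂ)) * star U).IsHermitian := by
  simpa [star_eq_conjTranspose] using
    isHermitian_mul_mul_conjTranspose U (isHermitian_diagonal_of_self_adjoint _
      (funext fun i => Complex.conj_ofReal (f i)))

end Matrix

lemma vnEntropy_unitary_conj_diagonal {U : Matrix n n ℂ} (hU : U ∈ unitaryGroup n ℂ)
    (f : n → ℝ) :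
    vnEntropy (U * diagonal (fun i => (f i : ℂ)) * star U) = (∑ i, negMulLog (f i)) / log 2 := by
  have hA := isHermitian_unitary_conj_diagonal U f
  rw [vnEntropy, dif_pos hA, ← Finset.sum_neg_distrib,
    hA.sum_comp_eigenvalues_unitary_conj_diagonal hU fun x => -(x * logb 2 x), Finset.sum_div]
  simp only [negMulLog, logb, neg_mul, neg_div, mul_div_assoc]

lemma vnEntropy_diagonal (f : n → ℝ) :
    vnEntropy (diagonal fun i => (f i : ℂ)) = (∑ i, negMulLog (f i)) / log 2 := by
  simpa using vnEntropy_unitary_conj_diagonal (one_mem (unitaryGroup n ℂ)) f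

lemma isDensityMatrix_single (j : n) : IsDensityMatrix (single j j (1 : ℂ)) := by
  refine ⟨?_, trace_single_eq_same j 1⟩
  rw [← diagonal_single]
  exact PosSemidef.diagonal (Pi.single_nonneg.2 zero_le_one)

lemma IsDensityMatrix.sum_eigenvalues {ρ : Matrix n n ℂ} (hρ : IsDensityMatrix ρ) :
    ∑ i, hρ.1.1.eigenvalues i = 1 := by
  have h := hρ.1.1.trace_eq_sum_eigenvalues.symm.trans hρ.2
  exact Complex.ofReal_eq_one.mp (by push_cast; exact h)

lemma IsEnsemble.isDensityMatrix_sum {k : ℕ} {p : Fin k → ℝ} {ρ : Fin k → Matrix n n ℂ}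
    (hens : IsEnsemble p ρ) : IsDensityMatrix (∑ j, (p j : ℂ) • ρ j) := by
  obtain ⟨hp, hsum, hρ⟩ := hens
  refine ⟨posSemidef_sum _ fun j _ => (hρ j).1.smul (by exact_mod_cast hp j), ?_⟩
  simp [trace_sum, (hρ _).2]
  exact_mod_cast hsum

end Spectral

section Entropy

variable {ι : Type*} [Fintype ι]

lemma sum_negMulLog_le_log_card {f : ι → ℝ} (h0 : ∀ i, 0 ≤ f i) (h1 : ∑ i, f i = 1) :
    ∑ i, negMulLog (f i) ≤ log (Fintype.card ι) := by
  have hN : (0 : ℝ) < Fintype.card ι := by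
    rcases isEmpty_or_nonempty ι with h | h
    · simp at h1
    · exact_mod_cast Fintype.card_pos
  have hJensen := concaveOn_negMulLog.le_map_sum (t := Finset.univ)
    (w := fun _ => (Fintype.card ι : ℝ)⁻¹) (p := f) (fun _ _ => by positivity)
    (by simp [hN.ne']) (fun i _ => Set.mem_Ici.2 (h0 i))
  have hN_inv :
      negMulLog (Fintype.card ι : ℝ)⁻¹ = (Fintype.card ι : ℝ)⁻¹ * log (Fintype.card ι) := by
    simp [negMulLog, log_inv]
  simp only [smul_eq_mul, ← Finset.mul_sum, h1, mul_one, hN_inv] at hJensen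
  exact le_of_mul_le_mul_left hJensen (inv_pos.2 hN)

lemma sum_negMulLog_interpolate_ge {a b : ℝ} (ha : 0 ≤ a) (hb : 0 ≤ b) {μ : ι → ℝ}
    (h0 : ∀ i, 0 ≤ μ i) (h1 : ∑ i, μ i = 1) :
    negMulLog a + (Fintype.card ι - 1) * negMulLog b
      ≤ ∑ i, negMulLog (μ i * a + (1 - μ i) * b) := by
  have hμ1 : ∀ i, μ i ≤ 1 := fun i =>
    h1 ▸ Finset.single_le_sum (fun j _ => h0 j) (Finset.mem_univ i)
  calc negMulLog a + (Fintype.card ι - 1) * negMulLog b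
      = ∑ i, (μ i * negMulLog a + (1 - μ i) * negMulLog b) := by
        rw [Finset.sum_add_distrib, ← Finset.sum_mul, ← Finset.sum_mul, Finset.sum_sub_distrib,
          h1]
        simp
    _ ≤ ∑ i, negMulLog (μ i * a + (1 - μ i) * b) :=
        Finset.sum_le_sum fun i _ =>
          concaveOn_negMulLog.2 ha hb (h0 i) (sub_nonneg.2 (hμ1 i)) (by ring)

end Entropy

section Depolarizing

variable {d : ℕ} {lam : ℝ}

/-- The output spectrum of `Δ_λ` on a pure state is `λ + (1 - λ)/d` once and `(1 - λ)/d` with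
multiplicity `d - 1`; this is its entropy. -/
noncomputable def pureOutputEntropy (d : ℕ) (lam : ℝ) : ℝ :=
  (negMulLog (lam + (1 - lam) / d) + (d - 1) * negMulLog ((1 - lam) / d)) / log 2

lemma depol_sum {ι : Type*} [Fintype ι] (c : ι → ℂ) (ρ : ι → Matrix (Fin d) (Fin d) ℂ) :
    depol d lam (∑ j, c j • ρ j) = ∑ j, c j • depol d lam (ρ j) := by
  simp only [depol, trace_sum, trace_smul, smul_add, Finset.sum_add_distrib, Finset.smul_sum,
    Finset.sum_smul, smul_smul, smul_eq_mul, mul_comm (lam : ℂ), mul_left_comm _ (c _)]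

lemma depol_eq_unitary_conj_diagonal {ρ : Matrix (Fin d) (Fin d) ℂ} (hρ : ρ.IsHermitian)
    (htr : ρ.trace = 1) :
    depol d lam ρ = (hρ.eigenvectorUnitary : Matrix (Fin d) (Fin d) ℂ)
      * diagonal (fun i => ((lam * hρ.eigenvalues i + (1 - lam) / d : ℝ) : ℂ))
      * star (hρ.eigenvectorUnitary : Matrix (Fin d) (Fin d) ℂ) := by
  set U := (hρ.eigenvectorUnitary : Matrix (Fin d) (Fin d) ℂ)
  have hUU : U * star U = 1 := mem_unitaryGroup_iff.mp hρ.eigenvectorUnitary.2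
  have hdiag : diagonal (fun i => ((lam * hρ.eigenvalues i + (1 - lam) / d : ℝ) : ℂ))
      = (lam : ℂ) • diagonal (fun i => (hρ.eigenvalues i : ℂ))
        + (((1 - lam) / d : ℝ) : ℂ) • 1 := by
    ext i j
    by_cases h : i = j <;> simp [h, one_apply]
  rw [depol, htr, one_smul, hdiag, Matrix.mul_add, Matrix.add_mul, Matrix.mul_smul,
    Matrix.smul_mul, Matrix.mul_smul, Matrix.smul_mul, Matrix.mul_one, hUU]
  conv_lhs => rw [hρ.spectral_theorem, Unitary.conjStarAlgAut_apply]
  rfl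

lemma vnEntropy_depol {ρ : Matrix (Fin d) (Fin d) ℂ} (hρ : IsDensityMatrix ρ) :
    vnEntropy (depol d lam ρ)
      = (∑ i, negMulLog (lam * hρ.1.1.eigenvalues i + (1 - lam) / d)) / log 2 := by
  rw [depol_eq_unitary_conj_diagonal hρ.1.1 hρ.2,
    vnEntropy_unitary_conj_diagonal hρ.1.1.eigenvectorUnitary.2]

lemma lam_mul_add_nonneg (hd : 0 < d) (hlam₀ : -1 ≤ ((d : ℝ) - 1) * lam) (hlam₁ : lam ≤ 1)
    {μ : ℝ} (hμ₀ : 0 ≤ μ) (hμ₁ : μ ≤ 1) : 0 ≤ lam * μ + (1 - lam) / d := by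
  have hd' : (0 : ℝ) < d := by exact_mod_cast hd
  rw [show lam * μ + (1 - lam) / d = ((1 - μ) * (1 - lam) + μ * (((d : ℝ) - 1) * lam + 1)) / d by
    field_simp; ring]
  have := mul_nonneg (sub_nonneg.2 hμ₁) (sub_nonneg.2 hlam₁)
  have := mul_nonneg hμ₀ (neg_le_iff_add_nonneg'.1 hlam₀)
  exact div_nonneg (by linarith) hd'.le

lemma vnEntropy_depol_le_logb (hd : 0 < d) (hlam₀ : -1 ≤ ((d : ℝ) - 1) * lam) (hlam₁ : lam ≤ 1)
    {ρ : Matrix (Fin d) (Fin d) ℂ} (hρ : IsDensityMatrix ρ) :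
    vnEntropy (depol d lam ρ) ≤ logb 2 d := by
  have hμ₀ := hρ.1.eigenvalues_nonneg
  have hμ₁ := hρ.sum_eigenvalues
  have hsum : ∑ i, (lam * hρ.1.1.eigenvalues i + (1 - lam) / d) = 1 := by
    simp only [Finset.sum_add_distrib, ← Finset.mul_sum, hμ₁, Finset.sum_const, Finset.card_univ,
      Fintype.card_fin, nsmul_eq_mul]
    field_simp
    ring
  rw [vnEntropy_depol hρ, logb]
  gcongr
  simpa using sum_negMulLog_le_log_card (fun i => lam_mul_add_nonneg hd hlam₀ hlam₁ (hμ₀ i)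
    (hμ₁ ▸ Finset.single_le_sum (fun j _ => hμ₀ j) (Finset.mem_univ i))) hsum

lemma pureOutputEntropy_le_vnEntropy_depol (hd : 0 < d) (hlam₀ : -1 ≤ ((d : ℝ) - 1) * lam)
    (hlam₁ : lam ≤ 1) {ρ : Matrix (Fin d) (Fin d) ℂ} (hρ : IsDensityMatrix ρ) :
    pureOutputEntropy d lam ≤ vnEntropy (depol d lam ρ) := by
  have key := sum_negMulLog_interpolate_ge
    (by simpa using lam_mul_add_nonneg hd hlam₀ hlam₁ zero_le_one le_rfl)
    (by simpa using lam_mul_add_nonneg hd hlam₀ hlam₁ le_rfl zero_le_one)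
    hρ.1.eigenvalues_nonneg hρ.sum_eigenvalues
  rw [Fintype.card_fin] at key
  rw [vnEntropy_depol hρ, pureOutputEntropy]
  gcongr
  exact key.trans_eq (Finset.sum_congr rfl fun i _ => congrArg negMulLog (by ring))

lemma holevoQ_depol_le (hd : 0 < d) (hlam₀ : -1 ≤ ((d : ℝ) - 1) * lam) (hlam₁ : lam ≤ 1)
    {k : ℕ} {p : Fin k → ℝ} {ρ : Fin k → Matrix (Fin d) (Fin d) ℂ} (hens : IsEnsemble p ρ) :
    holevoQ (depol d lam) p ρ ≤ logb 2 d - pureOutputEntropy d lam := by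
  have hmix := vnEntropy_depol_le_logb hd hlam₀ hlam₁ hens.isDensityMatrix_sum
  have hterms : pureOutputEntropy d lam ≤ ∑ j, p j * vnEntropy (depol d lam (ρ j)) :=
    calc pureOutputEntropy d lam = ∑ j, p j * pureOutputEntropy d lam := by
          rw [← Finset.sum_mul, hens.2.1, one_mul]
      _ ≤ ∑ j, p j * vnEntropy (depol d lam (ρ j)) :=
          Finset.sum_le_sum fun j _ => mul_le_mul_of_nonneg_left
            (pureOutputEntropy_le_vnEntropy_depol hd hlam₀ hlam₁ (hens.2.2 j)) (hens.1 j)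
  rw [holevoQ, ← depol_sum]
  linarith

end Depolarizing

section UniformBasis

variable {d : ℕ} {lam : ℝ}

lemma isEnsemble_uniform_basis (hd : 0 < d) :
    IsEnsemble (fun _ : Fin d => 1 / (d : ℝ)) (fun j => single j j 1) := by
  refine ⟨fun _ => by positivity, ?_, isDensityMatrix_single⟩
  simp [(Nat.cast_pos.2 hd).ne']

lemma depol_single (j : Fin d) :
    depol d lam (single j j 1)
      = diagonal fun i => ((if i = j then lam + (1 - lam) / d else (1 - lam) / d : ℝ) : ℂ) := by
  rw [depol, trace_single_eq_same, one_smul, ← diagonal_single]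
  ext a b
  rcases eq_or_ne a b with rfl | hab
  · by_cases haj : a = j <;> simp [haj]
  · simp [hab]

lemma vnEntropy_depol_single (hd : 0 < d) (j : Fin d) :
    vnEntropy (depol d lam (single j j 1)) = pureOutputEntropy d lam := by
  rw [depol_single, vnEntropy_diagonal, pureOutputEntropy]
  simp [apply_ite negMulLog, Finset.sum_ite, Finset.filter_ne', Finset.filter_eq', Nat.cast_sub hd]

lemma depol_uniform_basis_average (hd : 0 < d) :
    ∑ j : Fin d, ((1 / d : ℝ) : ℂ) • depol d lam (single j j 1)
      = diagonal fun _ => ((1 / d : ℝ) : ℂ) := by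
  rw [← depol_sum, ← Finset.smul_sum, sum_single_one, depol, trace_smul, trace_one]
  ext a b
  rcases eq_or_ne a b with rfl | hab
  · simp
    field_simp
    ring
  · simp [hab]

lemma holevoQ_depol_uniform_basis (hd : 0 < d) :
    holevoQ (depol d lam) (fun _ => 1 / (d : ℝ)) (fun j => single j j 1)
      = logb 2 d - pureOutputEntropy d lam := by
  have hd' : (d : ℝ) ≠ 0 := by positivity
  rw [holevoQ, depol_uniform_basis_average hd, vnEntropy_diagonal]
  simp only [vnEntropy_depol_single hd, Finset.sum_const, Finset.card_univ, Fintype.card_fin,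
    nsmul_eq_mul, negMulLog, one_div, log_inv, logb]
  field_simp

end UniformBasis

section Optimum

variable {d : ℕ}

lemma holevoCap_depol (hd : 0 < d) {lam : ℝ} (hlam₀ : -1 ≤ ((d : ℝ) - 1) * lam)
    (hlam₁ : lam ≤ 1) : holevoCap (depol d lam) = logb 2 d - pureOutputEntropy d lam :=
  IsGreatest.csSup_eq ⟨⟨d, _, _, isEnsemble_uniform_basis hd,
    (holevoQ_depol_uniform_basis hd).symm⟩,
    by rintro _ ⟨k, p, ρ, hens, rfl⟩; exact holevoQ_depol_le hd hlam₀ hlam₁ hens⟩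

lemma minOutEntropy_depol (hd : 0 < d) {lam : ℝ} (hlam₀ : -1 ≤ ((d : ℝ) - 1) * lam)
    (hlam₁ : lam ≤ 1) : minOutEntropy (depol d lam) = pureOutputEntropy d lam :=
  IsLeast.csInf_eq ⟨⟨single ⟨0, hd⟩ ⟨0, hd⟩ 1, isDensityMatrix_single _,
    (vnEntropy_depol_single hd _).symm⟩,
    by rintro _ ⟨ρ, hρ, rfl⟩; exact pureOutputEntropy_le_vnEntropy_depol hd hlam₀ hlam₁ hρ⟩

lemma sSup_sum_holevoQ_depol {ι : Type*} [Fintype ι] (hd : 0 < d) {lam : ι → ℝ}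
    (hlam₀ : ∀ i, -1 ≤ ((d : ℝ) - 1) * lam i) (hlam₁ : ∀ i, lam i ≤ 1) :
    sSup {x | ∃ (k : ℕ) (p : Fin k → ℝ) (ρ : Fin k → Matrix (Fin d) (Fin d) ℂ),
        IsEnsemble p ρ ∧ x = ∑ i, holevoQ (depol d (lam i)) p ρ}
      = ∑ i, holevoCap (depol d (lam i)) := by
  simp only [holevoCap_depol hd (hlam₀ _) (hlam₁ _)]
  exact IsGreatest.csSup_eq ⟨⟨d, _, _, isEnsemble_uniform_basis hd,
    (Finset.sum_congr rfl fun i _ => holevoQ_depol_uniform_basis hd).symm⟩,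
    by rintro _ ⟨k, p, ρ, hens, rfl⟩
       exact Finset.sum_le_sum fun i _ => holevoQ_depol_le hd (hlam₀ i) (hlam₁ i) hens⟩

end Optimum

lemma neg_one_le_sub_one_mul_of_neg_inv_le {d : ℕ} (hd : 2 ≤ d) {lam : ℝ}
    (hlam : -(1 / ((d : ℝ) ^ 2 - 1)) ≤ lam) : -1 ≤ ((d : ℝ) - 1) * lam := by
  have hd' : (2 : ℝ) ≤ d := by exact_mod_cast hd
  have hpos : 0 < (d : ℝ) ^ 2 - 1 := by nlinarith
  have h := mul_le_mul_of_nonneg_left hlam hpos.le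
  rw [mul_neg, mul_one_div_cancel hpos.ne'] at h
  rcases le_or_gt 0 lam with hlam₀ | hlam₀ <;> nlinarith

/-- For depolarizing branches, the supremum of the average and the
average of the suprema of the branch Holevo quantities coincide, and both equal
`log₂ d − (1/L) Σ_i S_min(Δ_{λ_i})`. -/
theorem periodic_product_state_capacity
    (d L : ℕ) (hd : 2 ≤ d) (hL : 1 ≤ L) (lam : Fin L → ℝ)
    (hlam : ∀ i, -(1 / ((d : ℝ)^2 - 1)) ≤ lam i ∧ lam i ≤ 1) :
    (1 / (L : ℝ)) * sSup {x | ∃ (k : ℕ) (p : Fin k → ℝ)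
        (ρ : Fin k → Matrix (Fin d) (Fin d) ℂ),
        IsEnsemble p ρ ∧ x = ∑ i : Fin L, holevoQ (depol d (lam i)) p ρ}
      = (1 / (L : ℝ)) * ∑ i : Fin L,
          sSup {x | ∃ (k : ℕ) (p : Fin k → ℝ)
            (ρ : Fin k → Matrix (Fin d) (Fin d) ℂ),
            IsEnsemble p ρ ∧ x = holevoQ (depol d (lam i)) p ρ}
    ∧
    (1 / (L : ℝ)) * ∑ i : Fin L,
        sSup {x | ∃ (k : ℕ) (p : Fin k → ℝ)
          (ρ : Fin k → Matrix (Fin d) (Fin d) ℂ),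
          IsEnsemble p ρ ∧ x = holevoQ (depol d (lam i)) p ρ}
      = Real.logb 2 d - (1 / (L : ℝ)) * ∑ i : Fin L, minOutEntropy (depol d (lam i)) := by
  have hd₀ : 0 < d := by omega
  have hlam₀ i := neg_one_le_sub_one_mul_of_neg_inv_le hd (hlam i).1
  have hcap i := holevoCap_depol hd₀ (hlam₀ i) (hlam i).2
  simp only [holevoCap] at hcap
  refine ⟨by rw [sSup_sum_holevoQ_depol hd₀ hlam₀ fun i => (hlam i).2]; rfl, ?_⟩
  have hL' : (L : ℝ) ≠ 0 := by exact_mod_cast (by omega : L ≠ 0)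
  simp only [hcap, minOutEntropy_depol hd₀ (hlam₀ _) (hlam _).2, Finset.sum_sub_distrib,
    Finset.sum_const, Finset.card_univ, Fintype.card_fin, nsmul_eq_mul]
  field_simp
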